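/- Let (u, θ, q) be a smooth solution of the thermoviscoelastic system with second sound satisfying boundary conditions (D). Then for all t > 0, the second-order energy satisfies dE₂/dt (t) = −2 ∫₀ᴸ δ(x) u_xtt(x,t)² dx − β ∫₀ᴸ q_t(x,t)² dx. -/

import Mathlib

open MeasureTheory Set intervalIntegral

noncomputable section

/-- Time derivative of a function of `(x, t)` (curried as `x ↦ t ↦ f x t`). -/
def pdt (f : ℝ → ℝ → ℝ) : ℝ → ℝ → ℝ := fun x t => deriv (f x) t

/-- Space derivative of a function of `(x, t)`. -/
def pdx (f : ℝ → ℝ → ℝ) : ℝ → ℝ → ℝ := fun x t => deriv (fun y => f y t) x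

/-- A smooth solution of the thermoviscoelastic system with second sound:
`u, θ, q` are `C^∞` and the three PDEs hold on `(0, L) × (0, ∞)`. -/
def IsSmoothSol (L η β κ τ : ℝ) (m δ p : ℝ → ℝ) (u θ q : ℝ → ℝ → ℝ) : Prop :=
  ContDiff ℝ (⊤ : ℕ∞) (Function.uncurry u) ∧ ContDiff ℝ (⊤ : ℕ∞) (Function.uncurry θ) ∧
    ContDiff ℝ (⊤ : ℕ∞) (Function.uncurry q) ∧
    ∀ x ∈ Ioo (0 : ℝ) L, ∀ t : ℝ, 0 < t →
      (m x * pdt (pdt u) x t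
          - pdx (fun y s => p y * pdx u y s + 2 * δ y * pdt (pdx u) y s) x t
          + η * pdx θ x t = 0) ∧
      (pdt θ x t + κ * pdx q x t + η * pdt (pdx u) x t = 0) ∧
      (τ * pdt q x t + β * q x t + κ * pdx θ x t = 0)

/-- Boundary conditions (D): clamped structure, temperature zero at both ends. -/
def BCD (L : ℝ) (u θ : ℝ → ℝ → ℝ) : Prop :=
  ∀ t : ℝ, 0 ≤ t → u 0 t = 0 ∧ u L t = 0 ∧ θ 0 t = 0 ∧ θ L t = 0

/-- The second-order energy `E₂`. -/
def energy2 (L τ : ℝ) (m p : ℝ → ℝ) (u θ q : ℝ → ℝ → ℝ) (t : ℝ) : ℝ :=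
  (1 / 2) * ((∫ x in (0 : ℝ)..L, p x * (pdt (pdx u) x t) ^ 2)
    + (∫ x in (0 : ℝ)..L, m x * (pdt (pdt u) x t) ^ 2)
    + (∫ x in (0 : ℝ)..L, (pdt θ x t) ^ 2)
    + τ * ∫ x in (0 : ℝ)..L, (pdt q x t) ^ 2)

section Helpers
open Function NNReal

lemma hasDerivAt_sect_t {f : ℝ → ℝ → ℝ} (hf : ContDiff ℝ (⊤ : ℕ∞) (uncurry f)) (x t : ℝ) :
    HasDerivAt (f x) (fderiv ℝ (uncurry f) (x, t) (0, 1)) t := by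
  have h1 : HasFDerivAt (uncurry f) (fderiv ℝ (uncurry f) (x, t)) (x, t) :=
    (hf.differentiable (by simp) (x, t)).hasFDerivAt
  have h2 : HasDerivAt (fun s : ℝ => ((x : ℝ), s)) (((0 : ℝ), (1 : ℝ))) t :=
    (hasDerivAt_const t x).prodMk (hasDerivAt_id t)
  exact h1.comp_hasDerivAt t h2

lemma hasDerivAt_sect_x {f : ℝ → ℝ → ℝ} (hf : ContDiff ℝ (⊤ : ℕ∞) (uncurry f)) (x t : ℝ) :
    HasDerivAt (fun y => f y t) (fderiv ℝ (uncurry f) (x, t) (1, 0)) x := by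
  have h1 : HasFDerivAt (uncurry f) (fderiv ℝ (uncurry f) (x, t)) (x, t) :=
    (hf.differentiable (by simp) (x, t)).hasFDerivAt
  have h2 : HasDerivAt (fun y : ℝ => (y, (t : ℝ))) (((1 : ℝ), (0 : ℝ))) x :=
    (hasDerivAt_id x).prodMk (hasDerivAt_const x t)
  exact h1.comp_hasDerivAt x h2

lemma pdt_eq {f : ℝ → ℝ → ℝ} (hf : ContDiff ℝ (⊤ : ℕ∞) (uncurry f)) (x t : ℝ) :
    pdt f x t = fderiv ℝ (uncurry f) (x, t) (0, 1) := (hasDerivAt_sect_t hf x t).deriv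

lemma pdx_eq {f : ℝ → ℝ → ℝ} (hf : ContDiff ℝ (⊤ : ℕ∞) (uncurry f)) (x t : ℝ) :
    pdx f x t = fderiv ℝ (uncurry f) (x, t) (1, 0) := (hasDerivAt_sect_x hf x t).deriv

lemma hasDerivAt_pdt {f : ℝ → ℝ → ℝ} (hf : ContDiff ℝ (⊤ : ℕ∞) (uncurry f)) (x t : ℝ) :
    HasDerivAt (f x) (pdt f x t) t := by rw [pdt_eq hf]; exact hasDerivAt_sect_t hf x t

lemma hasDerivAt_pdx {f : ℝ → ℝ → ℝ} (hf : ContDiff ℝ (⊤ : ℕ∞) (uncurry f)) (x t : ℝ) :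
    HasDerivAt (fun y => f y t) (pdx f x t) x := by rw [pdx_eq hf]; exact hasDerivAt_sect_x hf x t

lemma contDiff_pdt {f : ℝ → ℝ → ℝ} (hf : ContDiff ℝ (⊤ : ℕ∞) (uncurry f)) :
    ContDiff ℝ (⊤ : ℕ∞) (uncurry (pdt f)) := by
  have : uncurry (pdt f) = fun z : ℝ × ℝ => fderiv ℝ (uncurry f) z (0, 1) := by
    funext z; exact pdt_eq hf z.1 z.2
  rw [this]
  exact (hf.fderiv_right (by simp)).clm_apply contDiff_const

lemma contDiff_pdx {f : ℝ → ℝ → ℝ} (hf : ContDiff ℝ (⊤ : ℕ∞) (uncurry f)) :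
    ContDiff ℝ (⊤ : ℕ∞) (uncurry (pdx f)) := by
  have : uncurry (pdx f) = fun z : ℝ × ℝ => fderiv ℝ (uncurry f) z (1, 0) := by
    funext z; exact pdx_eq hf z.1 z.2
  rw [this]
  exact (hf.fderiv_right (by simp)).clm_apply contDiff_const

lemma fderiv_dir_hasDerivAt {f : ℝ → ℝ → ℝ} (hf : ContDiff ℝ (⊤ : ℕ∞) (uncurry f)) (x t : ℝ) (v : ℝ × ℝ) :
    HasDerivAt (fun s => fderiv ℝ (uncurry f) (x, s) v)
      ((fderiv ℝ (fderiv ℝ (uncurry f)) (x, t) (0, 1)) v) t := by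
  have hA : HasFDerivAt (fderiv ℝ (uncurry f)) (fderiv ℝ (fderiv ℝ (uncurry f)) (x, t)) (x, t) :=
    (((hf.fderiv_right (m := (⊤ : ℕ∞)) (by simp)).differentiable (by simp)) (x, t)).hasFDerivAt
  have h2 : HasDerivAt (fun s : ℝ => ((x : ℝ), s)) (((0 : ℝ), (1 : ℝ))) t :=
    (hasDerivAt_const t x).prodMk (hasDerivAt_id t)
  have h3 : HasDerivAt (fun s => fderiv ℝ (uncurry f) (x, s))
      (fderiv ℝ (fderiv ℝ (uncurry f)) (x, t) (0, 1)) t := hA.comp_hasDerivAt t h2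
  have h4 := h3.clm_apply (hasDerivAt_const t v)
  simpa using h4

lemma fderiv_dir_hasDerivAt_x {f : ℝ → ℝ → ℝ} (hf : ContDiff ℝ (⊤ : ℕ∞) (uncurry f)) (x t : ℝ)
    (v : ℝ × ℝ) :
    HasDerivAt (fun y => fderiv ℝ (uncurry f) (y, t) v)
      ((fderiv ℝ (fderiv ℝ (uncurry f)) (x, t) (1, 0)) v) x := by
  have hA : HasFDerivAt (fderiv ℝ (uncurry f)) (fderiv ℝ (fderiv ℝ (uncurry f)) (x, t)) (x, t) :=
    (((hf.fderiv_right (m := (⊤ : ℕ∞)) (by simp)).differentiable (by simp)) (x, t)).hasFDerivAt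
  have h2 : HasDerivAt (fun y : ℝ => (y, (t : ℝ))) (((1 : ℝ), (0 : ℝ))) x :=
    (hasDerivAt_id x).prodMk (hasDerivAt_const x t)
  have h3 : HasDerivAt (fun y => fderiv ℝ (uncurry f) (y, t))
      (fderiv ℝ (fderiv ℝ (uncurry f)) (x, t) (1, 0)) x := hA.comp_hasDerivAt x h2
  have h4 := h3.clm_apply (hasDerivAt_const x v)
  simpa using h4

lemma pdt_pdx_comm {f : ℝ → ℝ → ℝ} (hf : ContDiff ℝ (⊤ : ℕ∞) (uncurry f)) :
    pdt (pdx f) = pdx (pdt f) := by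
  funext x t
  have h1 : pdt (pdx f) x t = (fderiv ℝ (fderiv ℝ (uncurry f)) (x, t) (0, 1)) (1, 0) := by
    have heq : pdx f x = fun s => fderiv ℝ (uncurry f) (x, s) (1, 0) :=
      funext fun s => pdx_eq hf x s
    show deriv (pdx f x) t = _
    rw [heq]
    exact (fderiv_dir_hasDerivAt hf x t (1, 0)).deriv
  have h2 : pdx (pdt f) x t = (fderiv ℝ (fderiv ℝ (uncurry f)) (x, t) (1, 0)) (0, 1) := by
    have heq : (fun y => pdt f y t) = fun y => fderiv ℝ (uncurry f) (y, t) (0, 1) :=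
      funext fun y => pdt_eq hf y t
    show deriv (fun y => pdt f y t) x = _
    rw [heq]
    exact (fderiv_dir_hasDerivAt_x hf x t (0, 1)).deriv
  rw [h1, h2]
  exact second_derivative_symmetric (f := uncurry f)
    (fun y => ((hf.differentiable (by simp)) y).hasFDerivAt)
    ((((hf.fderiv_right (m := (⊤ : ℕ∞)) (by simp)).differentiable (by simp)) (x, t)).hasFDerivAt) _ _

lemma deriv_eventually_zero {v : ℝ → ℝ} {t : ℝ} (ht : 0 < t) (hv : ∀ s, 0 < s → v s = 0) :
    deriv v t = 0 := by
  have h : v =ᶠ[nhds t] fun _ => 0 := by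
    filter_upwards [Ioi_mem_nhds ht] with z hz using hv z hz
  rw [h.deriv_eq, deriv_const]

lemma le_of_lipschitzOnWith_ae_deriv_zero {e : ℝ → ℝ} {c d : ℝ} (hcd : c ≤ d) {K : NNReal}
    (he : LipschitzOnWith K e (Icc c d))
    (hd : ∀ᵐ y, y ∈ Ioo c d → HasDerivAt e 0 y) : e c ≤ e d := by
  classical
  set M : ℝ := (K : ℝ) with hM
  have hM0 : 0 ≤ M := K.coe_nonneg
  set g : ℝ → ℝ := fun y => e (projIcc c d hcd y) + M * y with hgdef
  have hproj : ∀ y ∈ Icc c d, ((projIcc c d hcd y : Icc c d) : ℝ) = y := fun y hy => by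
    rw [projIcc_of_mem hcd hy]
  have hgmono : Monotone g := by
    intro y z hyz
    have h1 : |e (projIcc c d hcd z) - e (projIcc c d hcd y)|
        ≤ M * |((projIcc c d hcd z : Icc c d) : ℝ) - ((projIcc c d hcd y : Icc c d) : ℝ)| := by
      have := he.dist_le_mul (projIcc c d hcd z) (projIcc c d hcd z).2
        (projIcc c d hcd y) (projIcc c d hcd y).2
      simpa [Real.dist_eq] using this
    have h2 : |((projIcc c d hcd z : Icc c d) : ℝ) - ((projIcc c d hcd y : Icc c d) : ℝ)|
        ≤ |z - y| := by
      have := (LipschitzWith.projIcc hcd).dist_le_mul z y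
      simpa [Subtype.dist_eq, Real.dist_eq] using this
    have h3 : |z - y| = z - y := abs_of_nonneg (by linarith)
    rw [h3] at h2
    have h4 := (abs_le.1 h1).1
    have h5 := mul_le_mul_of_nonneg_left h2 hM0
    simp only [hgdef]
    nlinarith [abs_nonneg (((projIcc c d hcd z : Icc c d) : ℝ) - ((projIcc c d hcd y : Icc c d) : ℝ))]
  have hgcont : Continuous g := by
    have h1 : Continuous fun y : ℝ => ((projIcc c d hcd y : Icc c d) : ℝ) :=
      continuous_subtype_val.comp (continuous_projIcc)
    have h2 : Continuous fun y : ℝ => e ((projIcc c d hcd y : Icc c d) : ℝ) := by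
      apply he.continuousOn.comp_continuous h1 (fun x => (projIcc c d hcd x).2)
    exact h2.add (continuous_const.mul continuous_id)
  set φ : StieltjesFunction ℝ :=
    { toFun := g
      mono' := hgmono
      right_continuous' := fun x => (hgcont.continuousAt).continuousWithinAt } with hφ
  have hae := φ.ae_hasDerivAt
  have key : ∀ᵐ y, y ∈ Ioo c d →
      ENNReal.ofReal M ≤ Measure.rnDeriv φ.measure volume y := by
    filter_upwards [hae, hd] with y h1 h2 hy
    have hgy : HasDerivAt g M y := by
      have h3 : HasDerivAt (fun z => e z + M * z) (0 + M * 1) y :=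
        (h2 hy).add ((hasDerivAt_id y).const_mul M)
      have h4 : g =ᶠ[nhds y] fun z => e z + M * z := by
        filter_upwards [Ioo_mem_nhds hy.1 hy.2] with z hz
        simp only [hgdef, hproj z (Ioo_subset_Icc_self hz)]
      have h3' : HasDerivAt (fun z => e z + M * z) M y := by simpa using h3
      exact h3'.congr_of_eventuallyEq h4
    have h5 : (Measure.rnDeriv φ.measure volume y).toReal = M := h1.unique hgy
    by_cases h6 : Measure.rnDeriv φ.measure volume y = ⊤
    · simp [h6]
    · rw [← ENNReal.ofReal_toReal h6, h5]
  have hchain : ENNReal.ofReal (M * (d - c)) ≤ ENNReal.ofReal (g d - g c) := by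
    have e1 : ENNReal.ofReal (M * (d - c)) = ∫⁻ _ in Ioo c d, ENNReal.ofReal M := by
      rw [setLIntegral_const, Real.volume_Ioo, ENNReal.ofReal_mul hM0]
    have e2 : (∫⁻ y in Ioo c d, ENNReal.ofReal M)
        ≤ ∫⁻ y in Ioo c d, Measure.rnDeriv φ.measure volume y := by
      apply lintegral_mono_ae
      rw [ae_restrict_iff' measurableSet_Ioo]
      exact key
    have e3 : (∫⁻ y in Ioo c d, Measure.rnDeriv φ.measure volume y)
        ≤ ∫⁻ y in Ioc c d, Measure.rnDeriv φ.measure volume y :=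
      lintegral_mono_set Ioo_subset_Ioc_self
    have e4 : (∫⁻ y in Ioc c d, Measure.rnDeriv φ.measure volume y) ≤ φ.measure (Ioc c d) :=
      Measure.setLIntegral_rnDeriv_le _
    rw [e1, φ.measure_Ioc] at *
    exact (e2.trans e3).trans e4
  have h7 : M * (d - c) ≤ g d - g c := by
    rcases ENNReal.ofReal_le_ofReal_iff'.mp hchain with h | h
    · exact h
    · have : g c ≤ g d := hgmono hcd
      linarith
  have h8 : g d = e d + M * d := by simp only [hgdef, hproj d ⟨hcd, le_refl d⟩]
  have h9 : g c = e c + M * c := by simp only [hgdef, hproj c ⟨le_refl c, hcd⟩]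
  rw [h8, h9] at h7
  linarith

lemma lipschitz_ftc {g h : ℝ → ℝ} {c d : ℝ} (hcd : c ≤ d) {K : NNReal}
    (hg : LipschitzOnWith K g (Icc c d)) (hh : ContinuousOn h (Icc c d))
    (hder : ∀ᵐ y, y ∈ Ioo c d → HasDerivAt g (h y) y) :
    g d - g c = ∫ y in c..d, h y := by
  classical
  obtain ⟨C, hC⟩ : ∃ C, ∀ y ∈ Icc c d, ‖h y‖ ≤ C :=
    isCompact_Icc.exists_bound_of_continuousOn hh
  have hC0 : 0 ≤ C := le_trans (norm_nonneg _) (hC c ⟨le_refl c, hcd⟩)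
  set w : ℝ → ℝ := fun y => ∫ s in c..y, h s with hwdef
  have hint : ∀ y ∈ Icc c d, ∀ z ∈ Icc c d, IntervalIntegrable h volume y z := by
    intro y hy z hz
    exact (hh.mono (uIcc_subset_Icc hy hz)).intervalIntegrable
  have hwsub : ∀ y ∈ Icc c d, ∀ z ∈ Icc c d, w z - w y = ∫ s in y..z, h s := by
    intro y hy z hz
    have := intervalIntegral.integral_add_adjacent_intervals
      (hint c ⟨le_refl c, hcd⟩ y hy) (hint y hy z hz)
    simp only [hwdef]; linarith
  have hwlip : LipschitzOnWith C.toNNReal w (Icc c d) := by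
    apply LipschitzOnWith.of_dist_le_mul
    intro y hy z hz
    rw [Real.dist_eq, Real.dist_eq, hwsub z hz y hy]
    calc |∫ s in z..y, h s| ≤ C * |y - z| := by
          rw [← Real.norm_eq_abs]
          apply intervalIntegral.norm_integral_le_of_norm_le_const
          intro s hs
          exact hC s (uIcc_subset_Icc hz hy (uIoc_subset_uIcc hs))
        _ = ↑C.toNNReal * |y - z| := by rw [Real.coe_toNNReal C hC0]
  have hwder : ∀ y ∈ Ioo c d, HasDerivAt w (h y) y := by
    intro y hy
    apply intervalIntegral.integral_hasDerivAt_right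
      (hint c ⟨le_refl c, hcd⟩ y (Ioo_subset_Icc_self hy))
    · exact (hh.mono Ioo_subset_Icc_self).stronglyMeasurableAtFilter isOpen_Ioo y hy
    · exact hh.continuousAt (Icc_mem_nhds hy.1 hy.2)
  set e : ℝ → ℝ := fun y => g y - w y with hedef
  have helip : LipschitzOnWith (K + C.toNNReal) e (Icc c d) := hg.sub hwlip
  have heder : ∀ᵐ y, y ∈ Ioo c d → HasDerivAt e 0 y := by
    filter_upwards [hder] with y hy hmem
    have := (hy hmem).sub (hwder y hmem); rw [sub_self] at this; exact this
  have h1 : e c ≤ e d := le_of_lipschitzOnWith_ae_deriv_zero hcd helip heder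
  have h2 : e d ≤ e c := by
    have hnlip : LipschitzOnWith (K + C.toNNReal) (fun y => -(e y)) (Icc c d) := by
      intro a ha b hb
      simpa [edist_comm (e a), edist_neg_neg] using helip ha hb
    have hneder : ∀ᵐ y, y ∈ Ioo c d → HasDerivAt (fun y => -(e y)) 0 y := by
      filter_upwards [heder] with y hy hmem
      have := (hy hmem).neg; rw [neg_zero] at this; exact this
    have := le_of_lipschitzOnWith_ae_deriv_zero hcd hnlip hneder
    simpa using this
  have h3 : e d = e c := le_antisymm h2 h1
  have h4 : w c = 0 := by simp [hwdef]
  have h5 : g d - g c = w d - w c := by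
    simp only [hedef] at h3; linarith
  rw [h5, h4]; simp [hwdef]

lemma hasDerivAt_param {a b : ℝ} (t : ℝ) (hab : a ≤ b) (F Fd : ℝ → ℝ → ℝ)
    (hFc : ∀ s : ℝ, ContinuousOn (fun x => F x s) (Icc a b))
    (hFdc : ContinuousOn (uncurry Fd) (Icc a b ×ˢ Icc (t - 1) (t + 1)))
    (hder : ∀ x ∈ Icc a b, ∀ s : ℝ, HasDerivAt (F x) (Fd x s) s) :
    HasDerivAt (fun s => ∫ x in a..b, F x s) (∫ x in a..b, Fd x t) t := by
  obtain ⟨C, hC⟩ : ∃ C, ∀ z ∈ Icc a b ×ˢ Icc (t - 1) (t + 1), ‖uncurry Fd z‖ ≤ C :=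
    (isCompact_Icc.prod isCompact_Icc).exists_bound_of_continuousOn hFdc
  have hIoc : Set.uIoc a b ⊆ Icc a b := by
    rw [uIoc_of_le hab]; exact Ioc_subset_Icc_self
  have key := intervalIntegral.hasDerivAt_integral_of_dominated_loc_of_deriv_le
    (𝕜 := ℝ) (μ := volume) (a := a) (b := b) (F := fun s x => F x s) (F' := fun s x => Fd x s)
    (x₀ := t) (bound := fun _ => C) (s := Metric.ball t 1) (Metric.ball_mem_nhds t one_pos)
    (Filter.Eventually.of_forall fun s =>
      (((hFc s).mono hIoc)).aestronglyMeasurable measurableSet_uIoc)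
    (by
      apply ContinuousOn.intervalIntegrable
      rw [uIcc_of_le hab]; exact hFc t)
    (by
      have hc : ContinuousOn (fun x => Fd x t) (Icc a b) := by
        have := hFdc.comp (f := fun x : ℝ => (x, t)) (continuous_id.prodMk continuous_const).continuousOn
          (fun x hx => ⟨hx, ⟨by linarith, by linarith⟩⟩)
        exact this
      exact (hc.mono hIoc).aestronglyMeasurable measurableSet_uIoc)
    (Filter.Eventually.of_forall fun x hx s hs => by
      have hsmem : s ∈ Icc (t - 1) (t + 1) := by
        have := Metric.mem_ball.mp hs
        rw [Real.dist_eq] at this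
        constructor <;> [linarith [abs_lt.mp this |>.1]; linarith [abs_lt.mp this |>.2]]
      exact hC (x, s) ⟨hIoc hx, hsmem⟩)
    intervalIntegrable_const
    (Filter.Eventually.of_forall fun x hx s _ => hder x (hIoc hx) s)
  exact key.2

lemma ibp_zero {L : ℝ} (hL : 0 < L) (a b a' b' : ℝ → ℝ)
    (ha : ContinuousOn a (Icc 0 L)) (hb : ContinuousOn b (Icc 0 L))
    (hda : ∀ y ∈ Ioo 0 L, HasDerivAt a (a' y) y)
    (hdb : ∀ y ∈ Ioo 0 L, HasDerivAt b (b' y) y)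
    (hint : IntervalIntegrable (fun y => a' y * b y + a y * b' y) volume 0 L)
    (h0 : a 0 = 0) (hL0 : a L = 0) :
    ∫ y in (0 : ℝ)..L, (a' y * b y + a y * b' y) = 0 := by
  have key := intervalIntegral.integral_eq_sub_of_hasDeriv_right_of_le hL.le
    (f := fun y => a y * b y) (f' := fun y => a' y * b y + a y * b' y)
    (ha.mul hb)
    (fun y hy => ((hda y hy).mul (hdb y hy)).hasDerivWithinAt)
    hint
  rw [key]; simp [h0, hL0]

lemma exists_lipschitzOnWith_mul {f g : ℝ → ℝ} {s : Set ℝ} (hs : IsCompact s)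
    (hf : ∃ K, LipschitzOnWith K f s) (hg : ∃ K, LipschitzOnWith K g s) :
    ∃ K, LipschitzOnWith K (fun y => f y * g y) s := by
  obtain ⟨Kf, hKf⟩ := hf
  obtain ⟨Kg, hKg⟩ := hg
  obtain ⟨Cf, hCf⟩ := hs.exists_bound_of_continuousOn hKf.continuousOn
  obtain ⟨Cg, hCg⟩ := hs.exists_bound_of_continuousOn hKg.continuousOn
  refine ⟨(Cf * (Kg : ℝ) + Cg * (Kf : ℝ)).toNNReal, LipschitzOnWith.of_dist_le_mul fun x hx y hy => ?_⟩
  have h1 : |f x * g x - f y * g y| ≤ |f x| * |g x - g y| + |g y| * |f x - f y| := by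
    have : f x * g x - f y * g y = f x * (g x - g y) + g y * (f x - f y) := by ring
    rw [this]
    exact (abs_add_le _ _).trans (by rw [abs_mul, abs_mul])
  have h2 : |g x - g y| ≤ (Kg : ℝ) * |x - y| := by
    have := hKg.dist_le_mul x hx y hy; simpa [Real.dist_eq] using this
  have h3 : |f x - f y| ≤ (Kf : ℝ) * |x - y| := by
    have := hKf.dist_le_mul x hx y hy; simpa [Real.dist_eq] using this
  have h4 : |f x| ≤ Cf := by simpa [Real.norm_eq_abs] using hCf x hx
  have h5 : |g y| ≤ Cg := by simpa [Real.norm_eq_abs] using hCg y hy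
  have h6 : 0 ≤ Cf := (abs_nonneg _).trans h4
  have h7 : 0 ≤ Cg := (abs_nonneg _).trans h5
  rw [Real.dist_eq, Real.dist_eq]
  have h8 : (((Cf * (Kg : ℝ) + Cg * (Kf : ℝ)).toNNReal : ℝ≥0) : ℝ) = Cf * (Kg : ℝ) + Cg * (Kf : ℝ) :=
    Real.coe_toNNReal _ (by positivity)
  rw [h8]
  nlinarith [abs_nonneg (f x - f y), abs_nonneg (g x - g y), abs_nonneg (x - y),
    mul_le_mul_of_nonneg_left h2 h6, mul_le_mul_of_nonneg_left h3 h7,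
    mul_le_mul_of_nonneg_right h4 (abs_nonneg (g x - g y)),
    mul_le_mul_of_nonneg_right h5 (abs_nonneg (f x - f y)),
    Kf.coe_nonneg, Kg.coe_nonneg]

lemma contDiff_exists_lipschitzOnWith {v : ℝ → ℝ} (hv : ContDiff ℝ (⊤ : ℕ∞) v) {a b : ℝ} :
    ∃ K, LipschitzOnWith K v (Icc a b) := by
  obtain ⟨C, hC⟩ : ∃ C, ∀ x ∈ Icc a b, ‖fderiv ℝ v x‖ ≤ C :=
    isCompact_Icc.exists_bound_of_continuousOn ((hv.fderiv_right (m := (⊤ : ℕ∞)) (by simp)).continuous.continuousOn)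
  rcases lt_or_ge a b with hab | hab
  · have hC0 : 0 ≤ C := (norm_nonneg _).trans (hC a ⟨le_refl a, hab.le⟩)
    refine ⟨C.toNNReal, ?_⟩
    apply (convex_Icc a b).lipschitzOnWith_of_nnnorm_fderivWithin_le
      ((hv.differentiable (by simp)).differentiableOn)
    intro x hx
    rw [← NNReal.coe_le_coe, coe_nnnorm, Real.coe_toNNReal _ hC0]
    rw [((hv.differentiable (by simp)) x).fderivWithin ((uniqueDiffOn_Icc hab) x hx)]
    exact hC x hx
  · refine ⟨1, LipschitzOnWith.of_dist_le_mul fun x hx y hy => ?_⟩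
    have hx' : x = a := le_antisymm (hx.2.trans hab) hx.1
    have hy' : y = a := le_antisymm (hy.2.trans hab) hy.1
    subst hx'; rw [hy']; simp

end Helpers

theorem second_energy_dissipation
    (L η β κ τ : ℝ) (hL : 0 < L) (hη : 0 < η) (hβ : 0 < β) (hκ : 0 < κ) (hτ : 0 < τ)
    (m δ p : ℝ → ℝ)
    (hmLip : ∃ K, LipschitzOnWith K m (Icc 0 L))
    (hδLip : ∃ K, LipschitzOnWith K δ (Icc 0 L))
    (hpLip : ∃ K, LipschitzOnWith K p (Icc 0 L))
    (hmpos : ∀ x ∈ Icc (0 : ℝ) L, 0 < m x)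
    (hδpos : ∀ x ∈ Icc (0 : ℝ) L, 0 < δ x)
    (hppos : ∀ x ∈ Icc (0 : ℝ) L, 0 < p x)
    (u θ q : ℝ → ℝ → ℝ)
    (hsol : IsSmoothSol L η β κ τ m δ p u θ q)
    (hbc : BCD L u θ) :
    ∀ t : ℝ, 0 < t →
      HasDerivAt (energy2 L τ m p u θ q)
        (-2 * (∫ x in (0 : ℝ)..L, δ x * (pdt (pdt (pdx u)) x t) ^ 2)
          - β * ∫ x in (0 : ℝ)..L, (pdt q x t) ^ 2) t := by
  obtain ⟨hu, hθ, hq, hpde⟩ := hsol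
  intro t ht
  -- smoothness of derivative fields
  have hux := contDiff_pdx hu
  have huxt := contDiff_pdt hux
  have huxtt := contDiff_pdt huxt
  have hut := contDiff_pdt hu
  have hutt := contDiff_pdt hut
  have huttt := contDiff_pdt hutt
  have hθx := contDiff_pdx hθ
  have hθt := contDiff_pdt hθ
  have hθxt := contDiff_pdt hθx
  have hθtt := contDiff_pdt hθt
  have hqx := contDiff_pdx hq
  have hqt := contDiff_pdt hq
  have hqxt := contDiff_pdt hqx
  have hqtt := contDiff_pdt hqt
  obtain ⟨Km, hKm⟩ := hmLip
  obtain ⟨Kδ, hKδ⟩ := hδLip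
  obtain ⟨Kp, hKp⟩ := hpLip
  have hmc : ContinuousOn m (Icc 0 L) := hKm.continuousOn
  have hδc : ContinuousOn δ (Icc 0 L) := hKδ.continuousOn
  have hpc : ContinuousOn p (Icc 0 L) := hKp.continuousOn
  -- continuity of sections
  have csect : ∀ {g : ℝ → ℝ → ℝ}, ContDiff ℝ (⊤ : ℕ∞) (Function.uncurry g) → ∀ s : ℝ,
      Continuous (fun x => g x s) := fun hg s =>
    hg.continuous.comp (continuous_id.prodMk continuous_const)
  have hII : ∀ {f : ℝ → ℝ}, ContinuousOn f (Icc 0 L) → IntervalIntegrable f volume 0 L := by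
    intro f hf
    apply ContinuousOn.intervalIntegrable
    rwa [uIcc_of_le hL.le]
  -- boundary values
  have hbu0 : ∀ s, 0 < s → pdt u 0 s = 0 := fun s hs =>
    deriv_eventually_zero hs (fun r hr => (hbc r hr.le).1)
  have hbuL : ∀ s, 0 < s → pdt u L s = 0 := fun s hs =>
    deriv_eventually_zero hs (fun r hr => (hbc r hr.le).2.1)
  have hbu0t : pdt (pdt u) 0 t = 0 := deriv_eventually_zero ht hbu0
  have hbuLt : pdt (pdt u) L t = 0 := deriv_eventually_zero ht hbuL
  have hbθ0t : pdt θ 0 t = 0 := deriv_eventually_zero ht (fun s hs => (hbc s hs.le).2.2.1)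
  have hbθLt : pdt θ L t = 0 := deriv_eventually_zero ht (fun s hs => (hbc s hs.le).2.2.2)
  -- cleaned first equation
  have pde1 : ∀ x ∈ Ioo (0 : ℝ) L, ∀ s : ℝ, 0 < s →
      deriv (fun y => p y * pdx u y s + 2 * δ y * pdt (pdx u) y s) x
        = m x * pdt (pdt u) x s + η * pdx θ x s := by
    intro x hx s hs
    have h := (hpde x hx s hs).1
    have h2 : pdx (fun y s' => p y * pdx u y s' + 2 * δ y * pdt (pdx u) y s') x s
        = deriv (fun y => p y * pdx u y s + 2 * δ y * pdt (pdx u) y s) x := rfl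
    rw [h2] at h
    linarith
  -- time-differentiated second equation
  have pde2 : ∀ x ∈ Ioo (0 : ℝ) L,
      pdt (pdt θ) x t + κ * pdt (pdx q) x t + η * pdt (pdt (pdx u)) x t = 0 := by
    intro x hx
    have hΦ : HasDerivAt (fun s => pdt θ x s + κ * pdx q x s + η * pdt (pdx u) x s)
        (pdt (pdt θ) x t + κ * pdt (pdx q) x t + η * pdt (pdt (pdx u)) x t) t :=
      ((hasDerivAt_pdt hθt x t).add ((hasDerivAt_pdt hqx x t).const_mul κ)).add
        ((hasDerivAt_pdt huxt x t).const_mul η)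
    have heq : (fun _ : ℝ => (0 : ℝ)) =ᶠ[nhds t]
        fun s => pdt θ x s + κ * pdx q x s + η * pdt (pdx u) x s := by
      filter_upwards [Ioi_mem_nhds ht] with s hs
      exact ((hpde x hx s hs).2.1).symm
    exact ((hΦ.congr_of_eventuallyEq heq).unique (hasDerivAt_const t 0)).symm ▸
      ((hΦ.congr_of_eventuallyEq heq).unique (hasDerivAt_const t 0))
  -- time-differentiated third equation
  have pde3 : ∀ x ∈ Ioo (0 : ℝ) L,
      τ * pdt (pdt q) x t + β * pdt q x t + κ * pdt (pdx θ) x t = 0 := by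
    intro x hx
    have hΦ : HasDerivAt (fun s => τ * pdt q x s + β * q x s + κ * pdx θ x s)
        (τ * pdt (pdt q) x t + β * pdt q x t + κ * pdt (pdx θ) x t) t :=
      (((hasDerivAt_pdt hqt x t).const_mul τ).add ((hasDerivAt_pdt hq x t).const_mul β)).add
        ((hasDerivAt_pdt hθx x t).const_mul κ)
    have heq : (fun _ : ℝ => (0 : ℝ)) =ᶠ[nhds t]
        fun s => τ * pdt q x s + β * q x s + κ * pdx θ x s := by
      filter_upwards [Ioi_mem_nhds ht] with s hs
      exact ((hpde x hx s hs).2.2).symm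
    exact (hΦ.congr_of_eventuallyEq heq).unique (hasDerivAt_const t 0)
  -- Lipschitz property of the flux in space
  have hGlip : ∀ s : ℝ, ∃ K, LipschitzOnWith K
      (fun y => p y * pdx u y s + 2 * δ y * pdt (pdx u) y s) (Icc 0 L) := by
    intro s
    have hA : ContDiff ℝ (⊤ : ℕ∞) (fun y => pdx u y s) :=
      hux.comp (contDiff_id.prodMk contDiff_const)
    have hB : ContDiff ℝ (⊤ : ℕ∞) (fun y => pdt (pdx u) y s) :=
      huxt.comp (contDiff_id.prodMk contDiff_const)
    have h1 : ∃ K, LipschitzOnWith K (fun y => p y * pdx u y s) (Icc 0 L) :=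
      exists_lipschitzOnWith_mul isCompact_Icc ⟨Kp, hKp⟩ (contDiff_exists_lipschitzOnWith hA)
    have h2 : ∃ K, LipschitzOnWith K (fun y => 2 * δ y) (Icc 0 L) :=
      exists_lipschitzOnWith_mul isCompact_Icc
        ⟨0, (LipschitzWith.const (2 : ℝ)).lipschitzOnWith⟩ ⟨Kδ, hKδ⟩
    have h3 : ∃ K, LipschitzOnWith K (fun y => 2 * δ y * pdt (pdx u) y s) (Icc 0 L) :=
      exists_lipschitzOnWith_mul isCompact_Icc h2 (contDiff_exists_lipschitzOnWith hB)
    obtain ⟨K1, hK1⟩ := h1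
    obtain ⟨K2, hK2⟩ := h3
    exact ⟨K1 + K2, hK1.add hK2⟩
  -- continuity of H(·,s) on Icc
  have hHc : ∀ s : ℝ, ContinuousOn (fun z => m z * pdt (pdt u) z s + η * pdx θ z s) (Icc 0 L) :=
    fun s => (hmc.mul (csect hutt s).continuousOn).add
      (continuousOn_const.mul (csect hθx s).continuousOn)
  have hH2c : ContinuousOn
      (fun z => m z * pdt (pdt (pdt u)) z t + η * pdt (pdx θ) z t) (Icc 0 L) :=
    (hmc.mul (csect huttt t).continuousOn).add
      (continuousOn_const.mul (csect hθxt t).continuousOn)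
  -- FTC representation of the flux
  have hrep : ∀ s : ℝ, 0 < s → ∀ y ∈ Icc (0 : ℝ) L,
      (p y * pdx u y s + 2 * δ y * pdt (pdx u) y s)
        - (p 0 * pdx u 0 s + 2 * δ 0 * pdt (pdx u) 0 s)
        = ∫ z in (0 : ℝ)..y, (m z * pdt (pdt u) z s + η * pdx θ z s) := by
    intro s hs y hy
    obtain ⟨K, hK⟩ := hGlip s
    have hder : ∀ᵐ z, z ∈ Ioo (0 : ℝ) y →
        HasDerivAt (fun y' => p y' * pdx u y' s + 2 * δ y' * pdt (pdx u) y' s)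
          (m z * pdt (pdt u) z s + η * pdx θ z s) z := by
      filter_upwards [hK.ae_differentiableWithinAt_of_mem (μ := volume)] with z hz hzy
      have hzIoo : z ∈ Ioo (0 : ℝ) L := ⟨hzy.1, lt_of_lt_of_le hzy.2 hy.2⟩
      have hd : DifferentiableAt ℝ
          (fun y' => p y' * pdx u y' s + 2 * δ y' * pdt (pdx u) y' s) z :=
        (hz (Ioo_subset_Icc_self hzIoo)).differentiableAt
          (Icc_mem_nhds hzIoo.1 hzIoo.2)
      have h5 := hd.hasDerivAt
      rwa [pde1 z hzIoo s hs] at h5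
    exact lipschitz_ftc hy.1 (hK.mono (Icc_subset_Icc_right hy.2))
      ((hHc s).mono (Icc_subset_Icc_right hy.2)) hder
  -- time-differentiated representation
  have hbrep : ∀ y ∈ Icc (0 : ℝ) L,
      p y * pdt (pdx u) y t + 2 * δ y * pdt (pdt (pdx u)) y t
        = (p 0 * pdt (pdx u) 0 t + 2 * δ 0 * pdt (pdt (pdx u)) 0 t)
          + ∫ z in (0 : ℝ)..y, (m z * pdt (pdt (pdt u)) z t + η * pdt (pdx θ) z t) := by
    intro y hy
    have hd1 : HasDerivAt (fun s => p y * pdx u y s + 2 * δ y * pdt (pdx u) y s)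
        (p y * pdt (pdx u) y t + 2 * δ y * pdt (pdt (pdx u)) y t) t :=
      ((hasDerivAt_pdt hux y t).const_mul (p y)).add
        ((hasDerivAt_pdt huxt y t).const_mul (2 * δ y))
    have hd0 : HasDerivAt (fun s => p 0 * pdx u 0 s + 2 * δ 0 * pdt (pdx u) 0 s)
        (p 0 * pdt (pdx u) 0 t + 2 * δ 0 * pdt (pdt (pdx u)) 0 t) t :=
      ((hasDerivAt_pdt hux 0 t).const_mul (p 0)).add
        ((hasDerivAt_pdt huxt 0 t).const_mul (2 * δ 0))
    have hdint : HasDerivAt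
        (fun s => ∫ z in (0 : ℝ)..y, (m z * pdt (pdt u) z s + η * pdx θ z s))
        (∫ z in (0 : ℝ)..y, (m z * pdt (pdt (pdt u)) z t + η * pdt (pdx θ) z t)) t := by
      apply hasDerivAt_param t hy.1
      · exact fun s => (hHc s).mono (Icc_subset_Icc_right hy.2)
      · show ContinuousOn (fun z : ℝ × ℝ =>
            m z.1 * pdt (pdt (pdt u)) z.1 z.2 + η * pdt (pdx θ) z.1 z.2) _
        apply ContinuousOn.add
        · apply ContinuousOn.mul
          · exact hmc.comp continuous_fst.continuousOn
              (fun z hz => Icc_subset_Icc_right hy.2 hz.1)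
          · exact huttt.continuous.continuousOn
        · exact continuousOn_const.mul hθxt.continuous.continuousOn
      · intro z _ s
        exact ((hasDerivAt_pdt hutt z s).const_mul (m z)).add
          ((hasDerivAt_pdt hθx z s).const_mul η)
    have heq : (fun s => p y * pdx u y s + 2 * δ y * pdt (pdx u) y s) =ᶠ[nhds t]
        fun s => (p 0 * pdx u 0 s + 2 * δ 0 * pdt (pdx u) 0 s)
          + ∫ z in (0 : ℝ)..y, (m z * pdt (pdt u) z s + η * pdx θ z s) := by
      filter_upwards [Ioi_mem_nhds ht] with s hs
      have := hrep s hs y hy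
      linarith
    exact hd1.unique ((hd0.add hdint).congr_of_eventuallyEq heq)
  -- FTC-1 for the H2 integral
  have hW : ∀ y ∈ Ioo (0 : ℝ) L, HasDerivAt
      (fun y' => ∫ z in (0 : ℝ)..y', (m z * pdt (pdt (pdt u)) z t + η * pdt (pdx θ) z t))
      (m y * pdt (pdt (pdt u)) y t + η * pdt (pdx θ) y t) y := by
    intro y hy
    apply intervalIntegral.integral_hasDerivAt_right
    · apply (hH2c.mono _).intervalIntegrable
      rw [uIcc_of_le hy.1.le]
      exact Icc_subset_Icc_right hy.2.le
    · exact (hH2c.mono Ioo_subset_Icc_self).stronglyMeasurableAtFilter isOpen_Ioo y hy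
    · exact hH2c.continuousAt (Icc_mem_nhds hy.1 hy.2)
  -- spatial derivative of the time-differentiated flux
  have hbder : ∀ y ∈ Ioo (0 : ℝ) L, HasDerivAt
      (fun y' => p y' * pdt (pdx u) y' t + 2 * δ y' * pdt (pdt (pdx u)) y' t)
      (m y * pdt (pdt (pdt u)) y t + η * pdt (pdx θ) y t) y := by
    intro y hy
    have h1 := (hasDerivAt_const y
      (p 0 * pdt (pdx u) 0 t + 2 * δ 0 * pdt (pdt (pdx u)) 0 t)).add (hW y hy)
    have h1' : HasDerivAt (fun y' => (p 0 * pdt (pdx u) 0 t + 2 * δ 0 * pdt (pdt (pdx u)) 0 t)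
        + ∫ z in (0 : ℝ)..y', (m z * pdt (pdt (pdt u)) z t + η * pdt (pdx θ) z t))
        (m y * pdt (pdt (pdt u)) y t + η * pdt (pdx θ) y t) y := by rw [zero_add] at h1; exact h1
    apply h1'.congr_of_eventuallyEq
    filter_upwards [Ioo_mem_nhds hy.1 hy.2] with z hz
    exact hbrep z (Ioo_subset_Icc_self hz)
  -- Clairaut rewrites
  have hcomm_u : pdx (pdt (pdt u)) = pdt (pdt (pdx u)) :=
    (pdt_pdx_comm hut).symm.trans (congrArg pdt (pdt_pdx_comm hu).symm)
  have hcomm_θ : pdx (pdt θ) = pdt (pdx θ) := (pdt_pdx_comm hθ).symm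
  have hcomm_q : pdx (pdt q) = pdt (pdx q) := (pdt_pdx_comm hq).symm
  -- continuity of sections at time t
  have cU1 := (csect huxt t).continuousOn (s := Icc 0 L)
  have cU2 := (csect hutt t).continuousOn (s := Icc 0 L)
  have cU3 := (csect huxtt t).continuousOn (s := Icc 0 L)
  have cU4 := (csect huttt t).continuousOn (s := Icc 0 L)
  have cT1 := (csect hθt t).continuousOn (s := Icc 0 L)
  have cT2 := (csect hθtt t).continuousOn (s := Icc 0 L)
  have cTX := (csect hθxt t).continuousOn (s := Icc 0 L)
  have cQ1 := (csect hqt t).continuousOn (s := Icc 0 L)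
  have cQ2 := (csect hqtt t).continuousOn (s := Icc 0 L)
  have cQX := (csect hqxt t).continuousOn (s := Icc 0 L)
  have cflux : ContinuousOn
      (fun y => p y * pdt (pdx u) y t + 2 * δ y * pdt (pdt (pdx u)) y t) (Icc 0 L) :=
    (hpc.mul cU1).add ((continuousOn_const.mul hδc).mul cU3)
  have hdaU : ∀ y ∈ Ioo (0 : ℝ) L, HasDerivAt (fun y' => pdt (pdt u) y' t)
      (pdt (pdt (pdx u)) y t) y := by
    intro y _
    have h := hasDerivAt_pdx hutt y t
    rwa [hcomm_u] at h
  have hdaT : ∀ y ∈ Ioo (0 : ℝ) L, HasDerivAt (fun y' => pdt θ y' t)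
      (pdt (pdx θ) y t) y := by
    intro y _
    have h := hasDerivAt_pdx hθt y t
    rwa [hcomm_θ] at h
  have hdaQ : ∀ y ∈ Ioo (0 : ℝ) L, HasDerivAt (fun y' => pdt q y' t)
      (pdt (pdx q) y t) y := by
    intro y _
    have h := hasDerivAt_pdx hqt y t
    rwa [hcomm_q] at h
  -- integration by parts identities
  have ibp1 : ∫ y in (0 : ℝ)..L,
      (pdt (pdt (pdx u)) y t * (p y * pdt (pdx u) y t + 2 * δ y * pdt (pdt (pdx u)) y t)
        + pdt (pdt u) y t * (m y * pdt (pdt (pdt u)) y t + η * pdt (pdx θ) y t)) = 0 := by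
    apply ibp_zero hL (fun y => pdt (pdt u) y t)
      (fun y => p y * pdt (pdx u) y t + 2 * δ y * pdt (pdt (pdx u)) y t)
      (fun y => pdt (pdt (pdx u)) y t)
      (fun y => m y * pdt (pdt (pdt u)) y t + η * pdt (pdx θ) y t)
      cU2 cflux hdaU hbder
      (hII ((cU3.mul cflux).add (cU2.mul hH2c)))
      hbu0t hbuLt
  have ibp2 : ∫ y in (0 : ℝ)..L,
      (pdt (pdt (pdx u)) y t * pdt θ y t + pdt (pdt u) y t * pdt (pdx θ) y t) = 0 := by
    apply ibp_zero hL (fun y => pdt (pdt u) y t) (fun y => pdt θ y t)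
      (fun y => pdt (pdt (pdx u)) y t) (fun y => pdt (pdx θ) y t)
      cU2 cT1 hdaU hdaT
      (hII ((cU3.mul cT1).add (cU2.mul cTX)))
      hbu0t hbuLt
  have ibp3 : ∫ y in (0 : ℝ)..L,
      (pdt (pdx θ) y t * pdt q y t + pdt θ y t * pdt (pdx q) y t) = 0 := by
    apply ibp_zero hL (fun y => pdt θ y t) (fun y => pdt q y t)
      (fun y => pdt (pdx θ) y t) (fun y => pdt (pdx q) y t)
      cT1 cQ1 hdaT hdaQ
      (hII ((cTX.mul cQ1).add (cT1.mul cQX)))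
      hbθ0t hbθLt
  -- derivative of the four energy integrals
  have hE1 : HasDerivAt (fun s => ∫ x in (0 : ℝ)..L, p x * (pdt (pdx u) x s) ^ 2)
      (∫ x in (0 : ℝ)..L, p x * (2 * pdt (pdx u) x t * pdt (pdt (pdx u)) x t)) t := by
    apply hasDerivAt_param t hL.le
    · exact fun s => hpc.mul ((csect huxt s).pow 2).continuousOn
    · show ContinuousOn (fun z : ℝ × ℝ =>
        p z.1 * (2 * pdt (pdx u) z.1 z.2 * pdt (pdt (pdx u)) z.1 z.2)) _
      exact (hpc.comp continuous_fst.continuousOn (fun z hz => hz.1)).mul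
        ((continuous_const.mul huxt.continuous).mul huxtt.continuous).continuousOn
    · intro x _ s
      have h := ((hasDerivAt_pdt huxt x s).fun_pow 2).const_mul (p x)
      exact h.congr_deriv (by push_cast; ring)
  have hE2 : HasDerivAt (fun s => ∫ x in (0 : ℝ)..L, m x * (pdt (pdt u) x s) ^ 2)
      (∫ x in (0 : ℝ)..L, m x * (2 * pdt (pdt u) x t * pdt (pdt (pdt u)) x t)) t := by
    apply hasDerivAt_param t hL.le
    · exact fun s => hmc.mul ((csect hutt s).pow 2).continuousOn
    · show ContinuousOn (fun z : ℝ × ℝ =>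
        m z.1 * (2 * pdt (pdt u) z.1 z.2 * pdt (pdt (pdt u)) z.1 z.2)) _
      exact (hmc.comp continuous_fst.continuousOn (fun z hz => hz.1)).mul
        ((continuous_const.mul hutt.continuous).mul huttt.continuous).continuousOn
    · intro x _ s
      have h := ((hasDerivAt_pdt hutt x s).fun_pow 2).const_mul (m x)
      exact h.congr_deriv (by push_cast; ring)
  have hE3 : HasDerivAt (fun s => ∫ x in (0 : ℝ)..L, (pdt θ x s) ^ 2)
      (∫ x in (0 : ℝ)..L, (2 * pdt θ x t * pdt (pdt θ) x t)) t := by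
    apply hasDerivAt_param t hL.le
    · exact fun s => ((csect hθt s).pow 2).continuousOn
    · show ContinuousOn (fun z : ℝ × ℝ => 2 * pdt θ z.1 z.2 * pdt (pdt θ) z.1 z.2) _
      exact ((continuous_const.mul hθt.continuous).mul hθtt.continuous).continuousOn
    · intro x _ s
      have h := (hasDerivAt_pdt hθt x s).fun_pow 2
      exact h.congr_deriv (by push_cast; ring)
  have hE4 : HasDerivAt (fun s => ∫ x in (0 : ℝ)..L, (pdt q x s) ^ 2)
      (∫ x in (0 : ℝ)..L, (2 * pdt q x t * pdt (pdt q) x t)) t := by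
    apply hasDerivAt_param t hL.le
    · exact fun s => ((csect hqt s).pow 2).continuousOn
    · show ContinuousOn (fun z : ℝ × ℝ => 2 * pdt q z.1 z.2 * pdt (pdt q) z.1 z.2) _
      exact ((continuous_const.mul hqt.continuous).mul hqtt.continuous).continuousOn
    · intro x _ s
      have h := (hasDerivAt_pdt hqt x s).fun_pow 2
      exact h.congr_deriv (by push_cast; ring)
  have hsum := (((hE1.add hE2).add hE3).add (hE4.const_mul τ)).const_mul (1 / 2 : ℝ)
  -- a.e. substitution of the PDEs in the time integrals
  have hne : ∀ᵐ x : ℝ, x ≠ L := by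
    have h0 : (volume : Measure ℝ) {L} = 0 := measure_singleton L
    filter_upwards [measure_eq_zero_iff_ae_notMem.mp h0] with x hx
    simpa using hx
  have hC2 : (∫ x in (0 : ℝ)..L, (2 * pdt θ x t * pdt (pdt θ) x t))
      = ∫ x in (0 : ℝ)..L, ((-(2 * κ)) * (pdt θ x t * pdt (pdx q) x t)
          + (-(2 * η)) * (pdt (pdt (pdx u)) x t * pdt θ x t)) := by
    apply intervalIntegral.integral_congr_ae
    filter_upwards [hne] with x hx hmem
    rw [uIoc_of_le hL.le] at hmem
    have hxIoo : x ∈ Ioo (0 : ℝ) L := ⟨hmem.1, lt_of_le_of_ne hmem.2 hx⟩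
    have h := pde2 x hxIoo
    linear_combination (2 * pdt θ x t) * h
  have hD2 : τ * (∫ x in (0 : ℝ)..L, (2 * pdt q x t * pdt (pdt q) x t))
      = ∫ x in (0 : ℝ)..L, ((-(2 * β)) * (pdt q x t ^ 2)
          + (-(2 * κ)) * (pdt (pdx θ) x t * pdt q x t)) := by
    rw [← intervalIntegral.integral_const_mul]
    apply intervalIntegral.integral_congr_ae
    filter_upwards [hne] with x hx hmem
    rw [uIoc_of_le hL.le] at hmem
    have hxIoo : x ∈ Ioo (0 : ℝ) L := ⟨hmem.1, lt_of_le_of_ne hmem.2 hx⟩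
    have h := pde3 x hxIoo
    linear_combination (2 * pdt q x t) * h
  -- integrability of the atoms
  have IIf1 : IntervalIntegrable
      (fun y => p y * (pdt (pdx u) y t * pdt (pdt (pdx u)) y t)) volume 0 L :=
    hII (hpc.mul (cU1.mul cU3))
  have IIf2 : IntervalIntegrable
      (fun y => 2 * (δ y * pdt (pdt (pdx u)) y t ^ 2)) volume 0 L :=
    hII (continuousOn_const.mul (hδc.mul (cU3.pow 2)))
  have IIf3 : IntervalIntegrable
      (fun y => m y * (pdt (pdt u) y t * pdt (pdt (pdt u)) y t)) volume 0 L :=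
    hII (hmc.mul (cU2.mul cU4))
  have IIf4 : IntervalIntegrable
      (fun y => η * (pdt (pdt u) y t * pdt (pdx θ) y t)) volume 0 L :=
    hII (continuousOn_const.mul (cU2.mul cTX))
  -- split ibp1
  have hsplit1 : (fun y => pdt (pdt (pdx u)) y t
        * (p y * pdt (pdx u) y t + 2 * δ y * pdt (pdt (pdx u)) y t)
        + pdt (pdt u) y t * (m y * pdt (pdt (pdt u)) y t + η * pdt (pdx θ) y t))
      = fun y => (p y * (pdt (pdx u) y t * pdt (pdt (pdx u)) y t)
          + 2 * (δ y * pdt (pdt (pdx u)) y t ^ 2)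
          + m y * (pdt (pdt u) y t * pdt (pdt (pdt u)) y t))
          + η * (pdt (pdt u) y t * pdt (pdx θ) y t) := funext fun y => by ring
  rw [hsplit1, intervalIntegral.integral_add ((IIf1.add IIf2).add IIf3) IIf4,
    intervalIntegral.integral_add (IIf1.add IIf2) IIf3,
    intervalIntegral.integral_add IIf1 IIf2,
    intervalIntegral.integral_const_mul, intervalIntegral.integral_const_mul] at ibp1
  -- split ibp2, ibp3
  rw [intervalIntegral.integral_add (hII (f := fun y => pdt (pdt (pdx u)) y t * pdt θ y t) (cU3.mul cT1))
    (hII (f := fun y => pdt (pdt u) y t * pdt (pdx θ) y t) (cU2.mul cTX))] at ibp2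
  rw [intervalIntegral.integral_add (hII (f := fun y => pdt (pdx θ) y t * pdt q y t) (cTX.mul cQ1))
    (hII (f := fun y => pdt θ y t * pdt (pdx q) y t) (cT1.mul cQX))] at ibp3
  -- split hC2, hD2
  have IIg1 : IntervalIntegrable
      (fun x => -(2 * κ) * (pdt θ x t * pdt (pdx q) x t)) volume 0 L :=
    (hII (cT1.mul cQX)).const_mul _
  have IIg2 : IntervalIntegrable
      (fun x => -(2 * η) * (pdt (pdt (pdx u)) x t * pdt θ x t)) volume 0 L :=
    (hII (cU3.mul cT1)).const_mul _
  rw [intervalIntegral.integral_add IIg1 IIg2,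
    intervalIntegral.integral_const_mul, intervalIntegral.integral_const_mul] at hC2
  have IIg3 : IntervalIntegrable (fun x => -(2 * β) * pdt q x t ^ 2) volume 0 L :=
    (hII (cQ1.pow 2)).const_mul _
  have IIg4 : IntervalIntegrable
      (fun x => -(2 * κ) * (pdt (pdx θ) x t * pdt q x t)) volume 0 L :=
    (hII (cTX.mul cQ1)).const_mul _
  rw [intervalIntegral.integral_add IIg3 IIg4,
    intervalIntegral.integral_const_mul, intervalIntegral.integral_const_mul] at hD2
  -- rewrite A and B
  have hA : (∫ x in (0 : ℝ)..L, p x * (2 * pdt (pdx u) x t * pdt (pdt (pdx u)) x t))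
      = 2 * ∫ x in (0 : ℝ)..L, p x * (pdt (pdx u) x t * pdt (pdt (pdx u)) x t) := by
    rw [show (fun x => p x * (2 * pdt (pdx u) x t * pdt (pdt (pdx u)) x t))
        = fun x => 2 * (p x * (pdt (pdx u) x t * pdt (pdt (pdx u)) x t))
      from funext fun x => by ring, intervalIntegral.integral_const_mul]
  have hB : (∫ x in (0 : ℝ)..L, m x * (2 * pdt (pdt u) x t * pdt (pdt (pdt u)) x t))
      = 2 * ∫ x in (0 : ℝ)..L, m x * (pdt (pdt u) x t * pdt (pdt (pdt u)) x t) := by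
    rw [show (fun x => m x * (2 * pdt (pdt u) x t * pdt (pdt (pdt u)) x t))
        = fun x => 2 * (m x * (pdt (pdt u) x t * pdt (pdt (pdt u)) x t))
      from funext fun x => by ring, intervalIntegral.integral_const_mul]
  -- conclude
  have hfinal : (1 / 2 : ℝ) *
      ((∫ x in (0 : ℝ)..L, p x * (2 * pdt (pdx u) x t * pdt (pdt (pdx u)) x t))
        + (∫ x in (0 : ℝ)..L, m x * (2 * pdt (pdt u) x t * pdt (pdt (pdt u)) x t))
        + (∫ x in (0 : ℝ)..L, (2 * pdt θ x t * pdt (pdt θ) x t))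
        + τ * ∫ x in (0 : ℝ)..L, (2 * pdt q x t * pdt (pdt q) x t))
      = -2 * (∫ x in (0 : ℝ)..L, δ x * (pdt (pdt (pdx u)) x t) ^ 2)
        - β * ∫ x in (0 : ℝ)..L, (pdt q x t) ^ 2 := by
    linear_combination (1 / 2 : ℝ) * hA + (1 / 2 : ℝ) * hB + (1 / 2 : ℝ) * hC2
      + (1 / 2 : ℝ) * hD2 + ibp1 - η * ibp2 - κ * ibp3
  have hres := hsum
  rw [hfinal] at hres
  exact hres
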